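/- In the hard-label estimation setting, suppose there exists a constant c > 0 such that |η(x) − 1/2| ≥ c holds P_X-almost surely. Then −(1−4c²)/(8cm) ≤ E[β̂(η̂_{1:n})] − β* ≤ 0, where β̂(η̂_{1:n}) = (1/n)∑_{i=1}^n min{η̂_i, 1−η̂_i} and each η̂_i is the average of m conditionally independent Bernoulli(η(x_i)) hard labels given an i.i.d. instance x_i ∼ P_X. -/

import Mathlib

open MeasureTheory ProbabilityTheory

/-! Since `min a (1 - a) = 1/2 - |a - 1/2|`, the bias at an instance with `η x = p` is
`d - 𝔼|η̂ - 1/2|` where `d = |p - 1/2|`. The map `a ↦ min a (1 - a)` is concave, so the bias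
is nonpositive. Conversely, AM-GM `2d|y| ≤ y² + d²` gives `𝔼|η̂ - 1/2| ≤ d + Var η̂ / (2d)`, and
`Var η̂ ≤ p(1 - p)/m = (1 - 4d²)/(4m)` by the Bhatia–Davis inequality, so the bias is at least
`-(1 - 4d²)/(8dm)`, a quantity increasing in `d ≥ c`. The estimator is an average over `n` i.i.d.
instances, so its expectation is the `μ ⊗ₘ κ`-expectation of a single term, and the pointwise
bounds integrate over `μ`. -/

lemma min_one_sub_eq_half_sub_abs (a : ℝ) : min a (1 - a) = 1 / 2 - |a - 1 / 2| := by
  rcases le_total a (1 / 2) with h | h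
  · rw [abs_of_nonpos (by linarith), min_eq_left (by linarith)]; ring
  · rw [abs_of_nonneg (by linarith), min_eq_right (by linarith)]; ring

lemma mul_one_sub_div_div_le {p c m : ℝ} (hc : 0 < c) (hcp : c ≤ |p - 1 / 2|) (hm : 0 < m) :
    p * (1 - p) / m / (2 * |p - 1 / 2|) ≤ (1 - 4 * c ^ 2) / (8 * c * m) := by
  set d := |p - 1 / 2|
  have hd : 0 < d := hc.trans_le hcp
  have hpd : p * (1 - p) = (1 - 4 * d ^ 2) / 4 := by rw [sq_abs]; ring
  rw [hpd, div_div, div_div, div_le_div_iff₀ (by positivity) (by positivity)]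
  nlinarith [mul_pos hc hd, mul_pos (mul_pos hc hd) hm]

section Moments

variable {Ω : Type*} [MeasurableSpace Ω] {μ : Measure Ω} [IsProbabilityMeasure μ]

lemma integral_abs_le_abs_integral_add_variance_div {Y : Ω → ℝ} (hY : MemLp Y 2 μ)
    (h : μ[Y] ≠ 0) :
    ∫ ω, |Y ω| ∂μ ≤ |μ[Y]| + Var[Y; μ] / (2 * |μ[Y]|) := by
  set d := |μ[Y]|
  have hd : 0 < d := abs_pos.mpr h
  have hpoint : ∀ ω, |Y ω| ≤ (Y ω ^ 2 + d ^ 2) / (2 * d) := fun ω => by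
    rw [le_div_iff₀ (by positivity), ← sq_abs (Y ω)]
    nlinarith [sq_nonneg (|Y ω| - d)]
  have hY2 : Integrable (fun ω => Y ω ^ 2) μ := hY.integrable_sq
  calc ∫ ω, |Y ω| ∂μ ≤ ∫ ω, (Y ω ^ 2 + d ^ 2) / (2 * d) ∂μ :=
        integral_mono (hY.integrable one_le_two).abs
          ((hY2.add (integrable_const _)).div_const _) hpoint
    _ = (μ[Y ^ 2] + d ^ 2) / (2 * d) := by
        rw [integral_div, integral_add hY2 (integrable_const _)]
        simp
    _ = d + Var[Y; μ] / (2 * d) := by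
        have hd2 : d ^ 2 = μ[Y] ^ 2 := sq_abs _
        rw [variance_eq_sub hY]
        field_simp
        linear_combination (-1) * hd2

lemma integral_min_one_sub_le {S : Ω → ℝ} (hS : Integrable S μ) :
    ∫ ω, min (S ω) (1 - S ω) ∂μ ≤ min μ[S] (1 - μ[S]) := by
  have hmin : Integrable (fun ω => min (S ω) (1 - S ω)) μ :=
    hS.inf ((integrable_const 1).sub hS)
  refine le_min (integral_mono hmin hS fun ω => min_le_left _ _) ?_
  calc ∫ ω, min (S ω) (1 - S ω) ∂μ ≤ ∫ ω, (1 - S ω) ∂μ :=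
        integral_mono hmin ((integrable_const 1).sub hS) fun ω => min_le_right _ _
    _ = 1 - μ[S] := by rw [integral_sub (integrable_const 1) hS]; simp

lemma min_integral_sub_variance_div_le_integral_min_one_sub {S : Ω → ℝ} (hS : MemLp S 2 μ)
    (h : μ[S] ≠ 1 / 2) :
    min μ[S] (1 - μ[S]) - Var[S; μ] / (2 * |μ[S] - 1 / 2|) ≤
      ∫ ω, min (S ω) (1 - S ω) ∂μ := by
  have hY : MemLp (fun ω => S ω - 1 / 2) 2 μ := hS.sub (memLp_const _)
  have hmean : μ[fun ω => S ω - 1 / 2] = μ[S] - 1 / 2 := by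
    rw [integral_sub (hS.integrable one_le_two) (integrable_const _)]; simp
  have hvar : Var[fun ω => S ω - 1 / 2; μ] = Var[S; μ] :=
    variance_sub_const hS.aestronglyMeasurable _
  have habs := integral_abs_le_abs_integral_add_variance_div hY (by rwa [hmean, sub_ne_zero])
  rw [hmean, hvar] at habs
  simp_rw [min_one_sub_eq_half_sub_abs]
  rw [integral_sub (integrable_const _) (hY.integrable one_le_two).abs]
  simp only [integral_const, probReal_univ, smul_eq_mul, one_mul]
  linarith

lemma integral_mem_Icc_of_ae_mem_Icc {G B : Ω → ℝ} (hG : Integrable G μ) (hB : Integrable B μ)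
    {C : ℝ} (h : ∀ᵐ ω ∂μ, G ω ∈ Set.Icc (B ω - C) (B ω)) :
    ∫ ω, G ω ∂μ ∈ Set.Icc (∫ ω, B ω ∂μ - C) (∫ ω, B ω ∂μ) := by
  have hlow : ∫ ω, (B ω - C) ∂μ ≤ ∫ ω, G ω ∂μ :=
    integral_mono_ae (hB.sub (integrable_const C)) hG (h.mono fun _ h => h.1)
  rw [integral_sub hB (integrable_const C)] at hlow
  simp only [integral_const, probReal_univ, smul_eq_mul, one_mul] at hlow
  exact ⟨hlow, integral_mono_ae hG hB (h.mono fun _ h => h.2)⟩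

end Moments

section SampleMean

variable {α : Type*}

noncomputable def sampleMean {n : ℕ} (g : α → ℝ) (ω : Fin n → α) : ℝ := (∑ i, g (ω i)) / n

lemma sampleMean_eq_sum_mul_inv {n : ℕ} (g : α → ℝ) :
    sampleMean (n := n) g = fun ω => (∑ i, g (ω i)) * (n : ℝ)⁻¹ :=
  funext fun _ => div_eq_mul_inv _ _

variable [MeasurableSpace α] {ν : Measure α} [IsProbabilityMeasure ν]

lemma integral_sampleMean {n : ℕ} (hn : n ≠ 0) {g : α → ℝ} (hg : Integrable g ν) :
    ∫ ω, sampleMean g ω ∂(Measure.pi fun _ : Fin n => ν) = ∫ x, g x ∂ν := by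
  rw [sampleMean_eq_sum_mul_inv, integral_mul_const,
    integral_finsetSum _ fun i _ => integrable_comp_eval hg, Finset.sum_congr rfl fun i _ => integral_comp_eval (μ := fun _ => ν) (i := i)
      hg.aestronglyMeasurable]
  simp only [Finset.sum_const, Finset.card_univ, Fintype.card_fin, nsmul_eq_mul]
  field_simp

lemma memLp_sampleMean {n : ℕ} {g : α → ℝ} (hg : MemLp g 2 ν) :
    MemLp (sampleMean (n := n) g) 2 (Measure.pi fun _ : Fin n => ν) := by
  have hsum : MemLp (fun ω => ∑ i, g (ω i)) 2 (Measure.pi fun _ : Fin n => ν) :=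
    memLp_finsetSum Finset.univ fun i _ =>
      hg.comp_measurePreserving (measurePreserving_eval _ i)
  rw [sampleMean_eq_sum_mul_inv]
  exact hsum.mul_const (n : ℝ)⁻¹

lemma variance_sampleMean {n : ℕ} {g : α → ℝ} (hg : MemLp g 2 ν) :
    Var[sampleMean g; Measure.pi fun _ : Fin n => ν] = Var[g; ν] / n := by
  have hsum := variance_sum_pi (μ := fun _ : Fin n => ν) (X := fun _ => g) fun _ => hg
  rw [Finset.sum_fn, Finset.sum_const, Finset.card_univ, Fintype.card_fin, nsmul_eq_mul] at hsum
  rw [sampleMean_eq_sum_mul_inv, variance_mul_const, hsum]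
  rcases eq_or_ne n 0 with rfl | hn
  · simp
  · field_simp

lemma min_sub_le_integral_min_sampleMean {m : ℕ} (hm : m ≠ 0) {g : α → ℝ} (hg : Measurable g)
    (hg01 : ∀ x, g x ∈ Set.Icc 0 1) {c : ℝ} (hc : 0 < c) (hcg : c ≤ |∫ x, g x ∂ν - 1 / 2|) :
    min (∫ x, g x ∂ν) (1 - ∫ x, g x ∂ν) - (1 - 4 * c ^ 2) / (8 * c * m) ≤
      ∫ ω, min (sampleMean g ω) (1 - sampleMean g ω) ∂(Measure.pi fun _ : Fin m => ν) := by
  have hgL2 : MemLp g 2 ν := memLp_of_bounded (ae_of_all _ hg01) hg.aestronglyMeasurable 2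
  have hmean := integral_sampleMean hm (hgL2.integrable one_le_two)
  have hne : ∫ x, g x ∂ν ≠ 1 / 2 := fun h => by simp [h] at hcg; linarith
  have key := min_integral_sub_variance_div_le_integral_min_one_sub
    (memLp_sampleMean (n := m) hgL2) (by rwa [hmean])
  rw [variance_sampleMean hgL2, hmean] at key
  have hvar : Var[g; ν] ≤ (1 - ∫ x, g x ∂ν) * (∫ x, g x ∂ν - 0) :=
    variance_le_sub_mul_sub (ae_of_all _ hg01) hg.aemeasurable
  have hm' : (0 : ℝ) < m := by positivity
  have hbound : Var[g; ν] / m / (2 * |∫ x, g x ∂ν - 1 / 2|) ≤ (1 - 4 * c ^ 2) / (8 * c * m) :=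
    calc Var[g; ν] / m / (2 * |∫ x, g x ∂ν - 1 / 2|)
        ≤ (∫ x, g x ∂ν) * (1 - ∫ x, g x ∂ν) / m / (2 * |∫ x, g x ∂ν - 1 / 2|) := by
          gcongr; linarith
      _ ≤ (1 - 4 * c ^ 2) / (8 * c * m) := mul_one_sub_div_div_le hc hcg hm'
  linarith

lemma integral_min_sampleMean_le {m : ℕ} (hm : m ≠ 0) {g : α → ℝ} (hg : Integrable g ν) :
    ∫ ω, min (sampleMean g ω) (1 - sampleMean g ω) ∂(Measure.pi fun _ : Fin m => ν) ≤
      min (∫ x, g x ∂ν) (1 - ∫ x, g x ∂ν) := by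
  have hS : Integrable (sampleMean g) (Measure.pi fun _ : Fin m => ν) := by
    rw [sampleMean_eq_sum_mul_inv]
    exact (integrable_finsetSum _ fun i _ => integrable_comp_eval hg).mul_const _
  simpa only [integral_sampleMean hm hg] using integral_min_one_sub_le hS

end SampleMean

set_option linter.deprecated false in
lemma integral_min_sampleMean_bernoulli_mem_Icc {m : ℕ} (hm : m ≠ 0) {p c : ℝ}
    (hp : p ∈ Set.Icc 0 1) (hc : 0 < c) (hcp : c ≤ |p - 1 / 2|) :
    ∫ v, min (sampleMean (fun b : Bool => if b then (1 : ℝ) else 0) v)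
        (1 - sampleMean (fun b : Bool => if b then (1 : ℝ) else 0) v)
      ∂(Measure.pi fun _ : Fin m =>
        (PMF.bernoulli p.toNNReal (Real.toNNReal_le_one.mpr hp.2)).toMeasure) ∈
      Set.Icc (min p (1 - p) - (1 - 4 * c ^ 2) / (8 * c * m)) (min p (1 - p)) := by
  set ν := (PMF.bernoulli p.toNNReal (Real.toNNReal_le_one.mpr hp.2)).toMeasure
  set label : Bool → ℝ := fun b => if b then 1 else 0
  have hmean : ∫ b, label b ∂ν = p := by
    simp [ν, label, PMF.integral_eq_sum, PMF.bernoulli_apply, hp.1]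
  have hlow := min_sub_le_integral_min_sampleMean (ν := ν) hm (measurable_of_countable label)
    (fun b => by cases b <;> simp [label]) hc (by rwa [hmean])
  have hup := integral_min_sampleMean_le (ν := ν) hm (Integrable.of_finite (f := label))
  rw [hmean] at hlow hup
  exact ⟨hlow, hup⟩

theorem bias_bound_well_separated
    {X : Type*} [MeasurableSpace X]
    (μ : Measure X) [IsProbabilityMeasure μ]
    (η : X → ℝ) (hη : Measurable η)
    (hη01 : ∀ x, η x ∈ Set.Icc (0 : ℝ) 1)
    (n m : ℕ) (hn : 0 < n) (hm : 0 < m)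
    (κ : Kernel X (Fin m → Bool)) [IsMarkovKernel κ]
    (hκ : ∀ x, κ x = Measure.pi fun _ : Fin m =>
      (PMF.bernoulli (Real.toNNReal (η x))
        (Real.toNNReal_le_one.mpr (hη01 x).2)).toMeasure)
    (c : ℝ) (hc : 0 < c)
    (hsep : ∀ᵐ x ∂μ, c ≤ |η x - 1 / 2|) :
    let P : Measure (Fin n → X × (Fin m → Bool)) :=
      (Measure.pi fun _ : Fin n => μ.compProd κ);
    let etaHat : (Fin n → X × (Fin m → Bool)) → Fin n → ℝ :=
      (fun ω i => (∑ j : Fin m, if (ω i).2 j then (1 : ℝ) else 0) / m);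
    let betaHat : (Fin n → X × (Fin m → Bool)) → ℝ :=
      (fun ω => (∑ i : Fin n, min (etaHat ω i) (1 - etaHat ω i)) / n);
    let bayes : ℝ := (∫ x, min (η x) (1 - η x) ∂μ);
    -((1 - 4 * c ^ 2) / (8 * c * (m : ℝ))) ≤ (∫ ω, betaHat ω ∂P) - bayes ∧
    (∫ ω, betaHat ω ∂P) - bayes ≤ 0 := by
  intro P etaHat betaHat bayes
  let label : Bool → ℝ := fun b => if b then 1 else 0
  let f : (Fin m → Bool) → ℝ := fun v => min (sampleMean label v) (1 - sampleMean label v)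
  have hf : Integrable (fun z : X × (Fin m → Bool) => f z.2) (μ.compProd κ) :=
    (Integrable.of_finite (f := f)).comp_measurable measurable_snd
  have hbeta : ∫ ω, betaHat ω ∂P = ∫ x, ∫ v, f v ∂κ x ∂μ := by
    rw [← Measure.integral_compProd hf]
    exact integral_sampleMean hn.ne' hf
  have hbounds : ∀ᵐ x ∂μ, ∫ v, f v ∂κ x ∈
      Set.Icc (min (η x) (1 - η x) - (1 - 4 * c ^ 2) / (8 * c * m)) (min (η x) (1 - η x)) := by
    filter_upwards [hsep] with x hx
    rw [hκ x]
    exact integral_min_sampleMean_bernoulli_mem_Icc hm.ne' (hη01 x) hc hx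
  have hη_int : Integrable η μ := .of_mem_Icc 0 1 hη.aemeasurable (ae_of_all _ hη01)
  have hbayes : Integrable (fun x => min (η x) (1 - η x)) μ :=
    hη_int.inf ((integrable_const 1).sub hη_int)
  have hG : Integrable (fun x => ∫ v, f v ∂κ x) μ := hf.integral_compProd
  have hint := integral_mem_Icc_of_ae_mem_Icc hG hbayes hbounds
  rw [hbeta]
  exact ⟨by linarith [hint.1], by linarith [hint.2]⟩
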